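/- arXiv:1610.04118 — 2 statements merged into one kernel-verified Lean document; each statement's English description precedes it below -/
import Mathlib

section
/- Let (𝒜, τ) be a tracial C*-probability space, let n ≥ 2, let X_1, …, X_n be tuples of self-adjoint elements of 𝒜 with X_i of length r(i), and let R > 0, N, m ∈ ℕ, δ > 0. Then χ̄_orb,R(X_1, …, X_n; N, m, δ) = sup over all A_i ∈ ((M_N(ℂ)^sa)_R)^{r(i)} of log γ_{U(N)}^{⊗(n−1)}({(U_1, …, U_{n−1}) ∈ U(N)^{n−1} : (U_1, …, U_{n−1}, I_N) ∈ Γ_orb(X_1, …, X_n : (A_i)_{i=1}^n; N, m, δ)}), where I_N is the identity matrix; and the same holds with both suprema restricted to A_i ∈ Γ_R(X_i; N, m, δ). -/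
open MeasureTheory Filter
open scoped ComplexOrder Matrix.Norms.L2Operator

/-- A `*`-monomial (word) in indeterminates indexed by `ι`: each letter is an
indeterminate together with a flag recording whether it is starred. -/
abbrev StarWord (ι : Type*) := List (ι × Bool)

/-- Evaluation of a `*`-monomial at a family of elements of a `*`-monoid. -/
def StarWord.eval {M : Type*} [Monoid M] [Star M] {ι : Type*} (w : StarWord ι) (x : ι → M) : M :=
  (w.map fun p => if p.2 then star (x p.1) else x p.1).prod

/-- The normalized trace `tr_N` on `N × N` complex matrices. -/
noncomputable def trN (N : ℕ) (B : Matrix (Fin N) (Fin N) ℂ) : ℂ :=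
  B.trace / (N : ℂ)

noncomputable instance matrixMeasurableSpace (N : ℕ) :
    MeasurableSpace (Matrix (Fin N) (Fin N) ℂ) := borel _

instance matrixBorelSpace (N : ℕ) : BorelSpace (Matrix (Fin N) (Fin N) ℂ) := ⟨rfl⟩

/-- The unitary group `U(N)`. -/
abbrev UN (N : ℕ) := Matrix.unitaryGroup (Fin N) ℂ

/-- `(M_N(ℂ)^sa)_R`: self-adjoint `N × N` matrices of (`ℓ²`-)operator norm at most `R`. -/
def MsaR (N : ℕ) (R : ℝ) : Set (Matrix (Fin N) (Fin N) ℂ) :=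
  {B | B.IsHermitian ∧ ‖B‖ ≤ R}

/-- `τ` is a faithful tracial state on the unital C*-algebra `A`. -/
structure IsTracialState {A : Type*} [CStarAlgebra A] (τ : A →ₗ[ℂ] ℂ) : Prop where
  map_one : τ 1 = 1
  nonneg : ∀ a : A, 0 ≤ τ (star a * a)
  faithful : ∀ a : A, τ (star a * a) = 0 → a = 0
  tracial : ∀ a b : A, τ (a * b) = τ (b * a)

variable {A : Type*} [CStarAlgebra A]

/-- The microstate set `Γ_R(X; N, m, δ)` of a tuple `X` of elements of `A`. -/
def ΓR {ι : Type*} (τ : A →ₗ[ℂ] ℂ) (X : ι → A) (R : ℝ) (N m : ℕ) (δ : ℝ) :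
    Set (ι → Matrix (Fin N) (Fin N) ℂ) :=
  {B | (∀ j, B j ∈ MsaR N R) ∧
    ∀ w : StarWord ι, w.length ≤ m →
      ‖trN N (w.eval B) - τ (w.eval X)‖ < δ}

/-- The orbital microstate set `Γ_orb(X_1, …, X_n : (A_i)_{i=1}^n; N, m, δ)`. -/
def Γorb {n : ℕ} {ι : Fin n → Type*} (τ : A →ₗ[ℂ] ℂ) (X : ∀ i, ι i → A) (N : ℕ)
    (B : ∀ i, ι i → Matrix (Fin N) (Fin N) ℂ) (m : ℕ) (δ : ℝ) :
    Set (Fin n → UN N) :=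
  {U | ∀ w : StarWord ((i : Fin n) × ι i), w.length ≤ m →
    ‖(trN N (w.eval fun p => (U p.1 : Matrix (Fin N) (Fin N) ℂ) * B p.1 p.2 *
          star (U p.1 : Matrix (Fin N) (Fin N) ℂ))
        - τ (w.eval fun p => X p.1 p.2))‖ < δ}

/-- The conditional orbital microstate set
`Γ_orb(X_1, …, X_n : (A_i)_{i=1}^n : v; N, m, δ)` in the presence of the unitaries `v`. -/
def ΓorbCond {n s : ℕ} {ι : Fin n → Type*} (τ : A →ₗ[ℂ] ℂ) (X : ∀ i, ι i → A)
    (v : Fin s → A) (N : ℕ) (B : ∀ i, ι i → Matrix (Fin N) (Fin N) ℂ) (m : ℕ) (δ : ℝ) :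
    Set (Fin n → UN N) :=
  {U | ∃ V : Fin s → UN N,
    ∀ w : StarWord ((i : Fin n) × ι i ⊕ Fin s), w.length ≤ m →
      ‖(trN N (w.eval (Sum.elim
            (fun p => (U p.1 : Matrix (Fin N) (Fin N) ℂ) * B p.1 p.2 *
              star (U p.1 : Matrix (Fin N) (Fin N) ℂ))
            (fun j => (V j : Matrix (Fin N) (Fin N) ℂ))))
          - τ (w.eval (Sum.elim (fun p => X p.1 p.2) v)))‖ < δ}

/-- The unitary microstate set `Γ_u(v; N, m, δ)`. -/
def Γu {s : ℕ} (τ : A →ₗ[ℂ] ℂ) (v : Fin s → A) (N m : ℕ) (δ : ℝ) :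
    Set (Fin s → UN N) :=
  {V | ∀ w : StarWord (Fin s), w.length ≤ m →
    ‖trN N (w.eval fun j => (V j : Matrix (Fin N) (Fin N) ℂ)) - τ (w.eval v)‖ < δ}

section Entropies

variable (γ : ∀ N : ℕ, Measure (UN N))

/-- `χ̄_orb,R(X_1, …, X_n; N, m, δ)`: the supremum over matricial tuples `B_i` in
`(M_N(ℂ)^sa)_R` of the logarithm of the Haar measure of the orbital microstate set. -/
noncomputable def chiOrbBar {n : ℕ} {ι : Fin n → Type*} (τ : A →ₗ[ℂ] ℂ)
    (X : ∀ i, ι i → A) (R : ℝ) (N m : ℕ) (δ : ℝ) : EReal :=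
  ⨆ (B : ∀ i, ι i → Matrix (Fin N) (Fin N) ℂ) (_ : ∀ i j, B i j ∈ MsaR N R),
    ENNReal.log ((Measure.pi fun _ : Fin n => γ N) (Γorb τ X N B m δ))

/-- `χ_orb,R(X_1, …, X_n)`. -/
noncomputable def chiOrbR {n : ℕ} {ι : Fin n → Type*} (τ : A →ₗ[ℂ] ℂ)
    (X : ∀ i, ι i → A) (R : ℝ) : EReal :=
  ⨅ (m : ℕ) (δ : ℝ) (_ : 0 < δ),
    limsup (fun N : ℕ => ((((N : ℝ) ^ 2)⁻¹ : ℝ) : EReal) * chiOrbBar γ τ X R N m δ) atTop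

/-- The orbital free entropy `χ_orb(X_1, …, X_n)`. -/
noncomputable def chiOrb {n : ℕ} {ι : Fin n → Type*} (τ : A →ₗ[ℂ] ℂ)
    (X : ∀ i, ι i → A) : EReal :=
  ⨆ (R : ℝ) (_ : 0 < R), chiOrbR γ τ X R

/-- `χ̄_orb,R(X_1, …, X_n : v; N, m, δ)`, conditional version. -/
noncomputable def chiOrbCondBar {n s : ℕ} {ι : Fin n → Type*} (τ : A →ₗ[ℂ] ℂ)
    (X : ∀ i, ι i → A) (v : Fin s → A) (R : ℝ) (N m : ℕ) (δ : ℝ) : EReal :=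
  ⨆ (B : ∀ i, ι i → Matrix (Fin N) (Fin N) ℂ) (_ : ∀ i j, B i j ∈ MsaR N R),
    ENNReal.log ((Measure.pi fun _ : Fin n => γ N) (ΓorbCond τ X v N B m δ))

/-- The conditional orbital free entropy `χ_orb(X_1, …, X_n : v)`. -/
noncomputable def chiOrbCond {n s : ℕ} {ι : Fin n → Type*} (τ : A →ₗ[ℂ] ℂ)
    (X : ∀ i, ι i → A) (v : Fin s → A) : EReal :=
  ⨆ (R : ℝ) (_ : 0 < R), ⨅ (m : ℕ) (δ : ℝ) (_ : 0 < δ),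
    limsup (fun N : ℕ => ((((N : ℝ) ^ 2)⁻¹ : ℝ) : EReal) * chiOrbCondBar γ τ X v R N m δ) atTop

/-- The microstate free entropy `χ_u(v)` of a tuple of unitaries. -/
noncomputable def chiU {s : ℕ} (τ : A →ₗ[ℂ] ℂ) (v : Fin s → A) : EReal :=
  ⨅ (m : ℕ) (δ : ℝ) (_ : 0 < δ),
    limsup (fun N : ℕ => ((((N : ℝ) ^ 2)⁻¹ : ℝ) : EReal) *
      ENNReal.log ((Measure.pi fun _ : Fin s => γ N) (Γu τ v N m δ))) atTop

end Entropies

/-- Free independence of a family of subsets of `A` with respect to `τ`. -/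
def FreelyIndependent (τ : A →ₗ[ℂ] ℂ) {κ : Type*} (S : κ → Set A) : Prop :=
  ∀ (p : ℕ), 1 ≤ p → ∀ (idx : Fin p → κ) (a : Fin p → A),
    (∀ j, a j ∈ StarAlgebra.adjoin ℂ (S (idx j))) →
    (∀ j, τ (a j) = 0) →
    (∀ (j : ℕ) (h : j + 1 < p), idx ⟨j, by omega⟩ ≠ idx ⟨j + 1, h⟩) →
    τ (List.ofFn a).prod = 0

/-- `X` has finite-dimensional approximants in the sense of Voiculescu. -/
def HasFDA {ι : Type*} (τ : A →ₗ[ℂ] ℂ) (X : ι → A) : Prop :=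
  ∀ (m : ℕ) (δ : ℝ), 0 < δ →
    ∀ᶠ N in atTop, (ΓR τ X ((⨆ j, ‖X j‖) + 1) N m δ).Nonempty

/-!
Left-multiplying all `U_i` by one unitary `V` conjugates every `*`-word in the `U_i A_i U_i^*`
by `V`, which leaves its normalized trace unchanged; so `Γ_orb` is invariant under the diagonal
left action of `U(N)`. For such a set `S ⊆ U(N)^n`, the change of variables
`(V, W_1, …, W_{n-1}) ↦ (V W_1, …, V W_{n-1}, V)` preserves `γ^{⊗n}` (left invariance and
Fubini) and pulls `S` back to `U(N) × slice`, where `slice` is the section of `S` at `U_n = I_N`.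
Hence `γ^{⊗n}(S) = γ^{⊗(n-1)}(slice)` for every choice of the `A_i`, and both suprema agree
term by term.
-/

theorem StarWord.eval_map {M M' F : Type*} [Monoid M] [Star M] [Monoid M'] [Star M']
    [FunLike F M M'] [MonoidHomClass F M M'] [StarHomClass F M M'] {ι : Type*}
    (f : F) (w : StarWord ι) (x : ι → M) :
    w.eval (fun i => f (x i)) = f (w.eval x) := by
  simp only [StarWord.eval, map_list_prod, List.map_map]
  congr 1
  refine List.map_congr_left fun ⟨i, b⟩ _ => ?_
  cases b <;> simp [map_star]

theorem trN_unitary_conj {N : ℕ} (u : UN N) (Y : Matrix (Fin N) (Fin N) ℂ) :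
    trN N (u * Y * star (u : Matrix (Fin N) (Fin N) ℂ)) = trN N Y := by
  rw [trN, Matrix.trace_mul_cycle, Unitary.star_mul_self_of_mem u.2, one_mul, trN]

theorem mul_left_mem_Γorb_iff {n : ℕ} {ι : Fin n → Type*} (τ : A →ₗ[ℂ] ℂ) (X : ∀ i, ι i → A)
    {N : ℕ} (B : ∀ i, ι i → Matrix (Fin N) (Fin N) ℂ) (m : ℕ) (δ : ℝ) (V : UN N)
    (U : Fin n → UN N) :
    (fun j => V * U j) ∈ Γorb τ X N B m δ ↔ U ∈ Γorb τ X N B m δ := by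
  have eval_conj : ∀ w : StarWord ((i : Fin n) × ι i),
      (w.eval fun p => ((V * U p.1 : UN N) : Matrix (Fin N) (Fin N) ℂ) * B p.1 p.2 *
          star ((V * U p.1 : UN N) : Matrix (Fin N) (Fin N) ℂ))
        = Unitary.conjStarAlgAut ℂ _ V (w.eval fun p => (U p.1 : Matrix (Fin N) (Fin N) ℂ) *
          B p.1 p.2 * star (U p.1 : Matrix (Fin N) (Fin N) ℂ)) := by
    intro w
    rw [← StarWord.eval_map]
    congr 1
    funext p
    simp [star_mul, mul_assoc]
  simp only [Γorb, Set.mem_ofPred_eq, eval_conj, Unitary.conjStarAlgAut_apply, trN_unitary_conj]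

section DiagonalShear

variable {G : Type*} [Group G] [MeasurableSpace G] [MeasurableMul₂ G] [MeasurableInv G]

def MeasurableEquiv.shearSMulRight (k : ℕ) : G × (Fin k → G) ≃ᵐ G × (Fin k → G) where
  toEquiv := .prodShear (.refl G) MulAction.toPerm
  measurable_toFun := measurable_fst.prodMk <| measurable_pi_lambda _ fun i =>
    measurable_fst.mul ((measurable_pi_apply i).comp measurable_snd)
  measurable_invFun := measurable_fst.prodMk <| measurable_pi_lambda _ fun i =>
    measurable_fst.inv.mul ((measurable_pi_apply i).comp measurable_snd)

@[simp]
theorem MeasurableEquiv.shearSMulRight_apply {k : ℕ} (p : G × (Fin k → G)) :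
    MeasurableEquiv.shearSMulRight k p = (p.1, p.1 • p.2) :=
  rfl

theorem measurePreserving_shearSMulRight (μ : Measure G) [SigmaFinite μ] [μ.IsMulLeftInvariant]
    (k : ℕ) :
    MeasurePreserving (MeasurableEquiv.shearSMulRight k)
      (μ.prod (Measure.pi fun _ : Fin k => μ)) (μ.prod (Measure.pi fun _ : Fin k => μ)) :=
  (MeasurePreserving.id μ).skew_product (g := fun V W => V • W)
    (MeasurableEquiv.shearSMulRight (G := G) k).measurable.snd
    (ae_of_all _ fun V => (measurePreserving_pi _ _ fun _ => measurePreserving_mul_left μ V).map_eq)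

theorem measure_pi_eq_measure_pi_snoc_one_preimage (μ : Measure G) [IsProbabilityMeasure μ]
    [μ.IsMulLeftInvariant] {k : ℕ} {S : Set (Fin (k + 1) → G)}
    (hS : ∀ (V : G) (U : Fin (k + 1) → G), (fun j => V * U j) ∈ S ↔ U ∈ S) :
    Measure.pi (fun _ => μ) S
      = Measure.pi (fun _ : Fin k => μ) ((fun W => Fin.snoc (α := fun _ => G) W 1) ⁻¹' S) := by
  let e := (MeasurableEquiv.shearSMulRight k).trans
    (MeasurableEquiv.piFinSuccAbove (fun _ => G) (Fin.last k)).symm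
  have he : MeasurePreserving e (μ.prod (Measure.pi fun _ : Fin k => μ)) (Measure.pi fun _ => μ) :=
    (measurePreserving_piFinSuccAbove (fun _ => μ) (Fin.last k)).symm.comp
      (measurePreserving_shearSMulRight μ k)
  have he_apply (V : G) (W : Fin k → G) :
      e (V, W) = fun j => V * Fin.snoc (α := fun _ => G) W 1 j := by
    refine funext (Fin.lastCases ?_ fun i => ?_) <;> simp [e, Fin.insertNthEquiv_last]
  have he_preimage : e ⁻¹' S = Set.univ ×ˢ ((fun W => Fin.snoc (α := fun _ => G) W 1) ⁻¹' S) := by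
    ext ⟨V, W⟩
    simp [he_apply, hS]
  rw [← he.measure_preimage_equiv, he_preimage, Measure.prod_prod, measure_univ, one_mul]

end DiagonalShear

theorem chiOrbBar_eq_slice_rep_general {A : Type*} [CStarAlgebra A]
    (τ : A →ₗ[ℂ] ℂ)
    (n : ℕ) (hn : 2 ≤ n) (r : Fin n → ℕ) (X : ∀ i, Fin (r i) → A)
    (R : ℝ) (N m : ℕ) (δ : ℝ)
    (γ : Measure (UN N)) (hγ : γ.IsHaarMeasure) (hγp : IsProbabilityMeasure γ) :
    (⨆ (B : ∀ i, Fin (r i) → Matrix (Fin N) (Fin N) ℂ) (_ : ∀ i j, B i j ∈ MsaR N R),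
        ENNReal.log ((Measure.pi fun _ : Fin n => γ) (Γorb τ X N B m δ)))
      = (⨆ (B : ∀ i, Fin (r i) → Matrix (Fin N) (Fin N) ℂ) (_ : ∀ i j, B i j ∈ MsaR N R),
          ENNReal.log ((Measure.pi fun _ : Fin (n - 1) => γ)
            {U : Fin (n - 1) → UN N |
              (fun i : Fin n => if h : (i : ℕ) < n - 1 then U ⟨i, h⟩ else 1)
                ∈ Γorb τ X N B m δ}))
    ∧ (⨆ (B : ∀ i, Fin (r i) → Matrix (Fin N) (Fin N) ℂ)
          (_ : ∀ i, B i ∈ ΓR τ (X i) R N m δ),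
          ENNReal.log ((Measure.pi fun _ : Fin n => γ) (Γorb τ X N B m δ)))
      = ⨆ (B : ∀ i, Fin (r i) → Matrix (Fin N) (Fin N) ℂ)
          (_ : ∀ i, B i ∈ ΓR τ (X i) R N m δ),
          ENNReal.log ((Measure.pi fun _ : Fin (n - 1) => γ)
            {U : Fin (n - 1) → UN N |
              (fun i : Fin n => if h : (i : ℕ) < n - 1 then U ⟨i, h⟩ else 1)
                ∈ Γorb τ X N B m δ}) := by
  obtain ⟨k, rfl⟩ : ∃ k, n = k + 1 := ⟨n - 1, by omega⟩
  have measure_eq_slice (B : ∀ i, Fin (r i) → Matrix (Fin N) (Fin N) ℂ) :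
      (Measure.pi fun _ : Fin (k + 1) => γ) (Γorb τ X N B m δ)
        = (Measure.pi fun _ : Fin k => γ)
            {W | (fun i : Fin (k + 1) => if h : (i : ℕ) < k then W ⟨i, h⟩ else 1)
              ∈ Γorb τ X N B m δ} :=
    -- the padding by `1` in the statement is `Fin.snoc W 1` unfolded
    measure_pi_eq_measure_pi_snoc_one_preimage γ (mul_left_mem_Γorb_iff τ X B m δ)
  exact ⟨iSup_congr fun B => iSup_congr fun _ => congrArg ENNReal.log (measure_eq_slice B),
    iSup_congr fun B => iSup_congr fun _ => congrArg ENNReal.log (measure_eq_slice B)⟩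

/-- **Remark 2.** Alternative representation of
`χ̄_orb,R(X_1, …, X_n; N, m, δ)` for `n ≥ 2`: the supremum of the `γ^{⊗n}`-measure of the
orbital microstate sets equals the supremum of the `γ^{⊗(n-1)}`-measure of their slices at
`U_n = I_N`, both for the suprema over all tuples in `(M_N(ℂ)^sa)_R` and for the suprema
restricted to the microstate sets `Γ_R(X_i; N, m, δ)`. -/
theorem chiOrbBar_eq_slice_rep {A : Type*} [CStarAlgebra A]
    (τ : A →ₗ[ℂ] ℂ) (hτ : IsTracialState τ)
    (n : ℕ) (hn : 2 ≤ n) (r : Fin n → ℕ) (X : ∀ i, Fin (r i) → A)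
    (hX : ∀ i j, IsSelfAdjoint (X i j))
    (R : ℝ) (hR : 0 < R) (N m : ℕ) (δ : ℝ) (hδ : 0 < δ)
    (γ : Measure (UN N)) (hγ : γ.IsHaarMeasure) (hγp : IsProbabilityMeasure γ) :
    (⨆ (B : ∀ i, Fin (r i) → Matrix (Fin N) (Fin N) ℂ) (_ : ∀ i j, B i j ∈ MsaR N R),
        ENNReal.log ((Measure.pi fun _ : Fin n => γ) (Γorb τ X N B m δ)))
      = (⨆ (B : ∀ i, Fin (r i) → Matrix (Fin N) (Fin N) ℂ) (_ : ∀ i j, B i j ∈ MsaR N R),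
          ENNReal.log ((Measure.pi fun _ : Fin (n - 1) => γ)
            {U : Fin (n - 1) → UN N |
              (fun i : Fin n => if h : (i : ℕ) < n - 1 then U ⟨i, h⟩ else 1)
                ∈ Γorb τ X N B m δ}))
    ∧ (⨆ (B : ∀ i, Fin (r i) → Matrix (Fin N) (Fin N) ℂ)
          (_ : ∀ i, B i ∈ ΓR τ (X i) R N m δ),
          ENNReal.log ((Measure.pi fun _ : Fin n => γ) (Γorb τ X N B m δ)))
      = ⨆ (B : ∀ i, Fin (r i) → Matrix (Fin N) (Fin N) ℂ)
          (_ : ∀ i, B i ∈ ΓR τ (X i) R N m δ),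
          ENNReal.log ((Measure.pi fun _ : Fin (n - 1) => γ)
            {U : Fin (n - 1) → UN N |
              (fun i : Fin n => if h : (i : ℕ) < n - 1 then U ⟨i, h⟩ else 1)
                ∈ Γorb τ X N B m δ}) :=
  chiOrbBar_eq_slice_rep_general τ n hn r X R N m δ γ hγ hγp
end

section
/- Let N, n ∈ ℕ and let γ_{U(N)} be the Haar probability measure on the group U(N) of N×N complex unitary matrices. Let A ⊆ U(N)^n and Θ, S ⊆ U(N)^{n+1} be measurable sets such that: (i) for every (V_1, …, V_n, U) ∈ Θ with (V_1, …, V_n) ∈ A one has (V_1 U, …, V_n U, U) ∈ S; and (ii) for every (V_1, …, V_n) ∈ U(N)^n one has γ_{U(N)}({U ∈ U(N) : (V_1, …, V_n, U) ∈ Θ}) > 1/2. Then γ_{U(N)}^{⊗(n+1)}(S) ≥ (1/2) · γ_{U(N)}^{⊗n}(A). -/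
open MeasureTheory

/-!
Integrating the slice bound (ii) over `A` gives `(γ^{⊗n} ⊗ γ)(Θ ∩ (A × U(N))) ≥ γ^{⊗n}(A) / 2`.
For fixed `U`, right multiplication `V ↦ (V_i U)_i` preserves `γ^{⊗n}` (a Haar probability measure
is right invariant as well) and by (i) maps the `U`-slice of `Θ ∩ (A × U(N))` into the `U`-slice
of `S`; integrating the slices over `U` compares the two sets.
-/

instance (N : ℕ) : LocallyCompactSpace (UN N) :=
  have : LocallyCompactSpace (Matrix (Fin N) (Fin N) ℂ) :=
    inferInstanceAs (LocallyCompactSpace (Fin N → Fin N → ℂ))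
  isClosed_unitary.locallyCompactSpace

namespace MeasureTheory.Measure

/-- Right translates of a Haar probability measure are Haar probability measures, which are
unique. -/
theorem IsHaarMeasure.isMulRightInvariant_of_isProbabilityMeasure {G : Type*} [Group G]
    [TopologicalSpace G] [IsTopologicalGroup G] [LocallyCompactSpace G] [MeasurableSpace G]
    [BorelSpace G] (μ : Measure G) [IsHaarMeasure μ] [IsProbabilityMeasure μ] :
    IsMulRightInvariant μ where
  map_mul_right_eq_self g :=
    have : IsProbabilityMeasure (μ.map (· * g)) :=
      isProbabilityMeasure_map (measurable_mul_const g).aemeasurable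
    isHaarMeasure_eq_of_isProbabilityMeasure _ μ

variable {X Y : Type*} [MeasurableSpace X] [MeasurableSpace Y] {μ : Measure X} {ν : Measure Y}
  [SFinite ν]

theorem mul_measure_le_prod_inter_fst_preimage {A : Set X} {Θ : Set (X × Y)}
    (hA : MeasurableSet A) (hΘ : MeasurableSet Θ) {c : ENNReal}
    (hc : ∀ x ∈ A, c ≤ ν {y | (x, y) ∈ Θ}) :
    c * μ A ≤ μ.prod ν (Θ ∩ Prod.fst ⁻¹' A) := by
  rw [← lintegral_indicator_const hA, prod_apply (hΘ.inter (measurable_fst hA))]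
  refine lintegral_mono fun x => ?_
  by_cases hx : x ∈ A
  · simpa [Set.indicator_of_mem hx, Set.preimage, hx] using hc x hx
  · simp [Set.indicator_of_notMem hx]

theorem prod_le_prod_of_mapsTo_measurePreserving [SFinite μ] {T : Y → X → X}
    (hT : ∀ y, MeasurePreserving (T y) μ μ) {P S : Set (X × Y)} (hP : MeasurableSet P)
    (hS : MeasurableSet S) (hPS : ∀ x y, (x, y) ∈ P → (T y x, y) ∈ S) :
    μ.prod ν P ≤ μ.prod ν S := by
  rw [prod_apply_symm hP, prod_apply_symm hS]
  refine lintegral_mono fun y => ?_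
  calc μ ((·, y) ⁻¹' P) ≤ μ (T y ⁻¹' ((·, y) ⁻¹' S)) := measure_mono fun x => hPS x y
    _ = μ ((·, y) ⁻¹' S) :=
      (hT y).measure_preimage (hS.preimage measurable_prodMk_right).nullMeasurableSet

end MeasureTheory.Measure

/-- The abstract measure-theoretic core of the lower bound for orbital free
entropy under unitary conjugation: if every `Θ`-slice has Haar measure `> 1/2` and `Θ`
transports `A` into `S` via `(V, U) ↦ ((V_i U)_i, U)`, then `γ^{⊗(n+1)}(S) ≥ γ^{⊗n}(A)/2`. -/
theorem measure_ge_half_of_transport (N n : ℕ)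
    (γ : Measure (UN N)) (hγ : γ.IsHaarMeasure) (hγp : IsProbabilityMeasure γ)
    (A : Set (Fin n → UN N)) (hA : MeasurableSet A)
    (Θ S : Set ((Fin n → UN N) × UN N)) (hΘ : MeasurableSet Θ) (hS : MeasurableSet S)
    (h1 : ∀ (V : Fin n → UN N) (U : UN N),
      (V, U) ∈ Θ → V ∈ A → ((fun i => V i * U), U) ∈ S)
    (h2 : ∀ V : Fin n → UN N, 1 / 2 < γ {U : UN N | (V, U) ∈ Θ}) :
    1 / 2 * (Measure.pi fun _ : Fin n => γ) A
      ≤ ((Measure.pi fun _ : Fin n => γ).prod γ) S := by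
  have := hγ
  have := hγp
  have := Measure.IsHaarMeasure.isMulRightInvariant_of_isProbabilityMeasure γ
  calc 1 / 2 * (Measure.pi fun _ : Fin n => γ) A
      ≤ ((Measure.pi fun _ : Fin n => γ).prod γ) (Θ ∩ Prod.fst ⁻¹' A) :=
        Measure.mul_measure_le_prod_inter_fst_preimage hA hΘ fun V _ => (h2 V).le
    _ ≤ ((Measure.pi fun _ : Fin n => γ).prod γ) S :=
        Measure.prod_le_prod_of_mapsTo_measurePreserving
          (fun U => measurePreserving_pi _ _ fun _ => measurePreserving_mul_right γ U)
          (hΘ.inter (measurable_fst hA)) hS fun V U hVU => h1 V U hVU.1 hVU.2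
end
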